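/- The spatial Cartan coefficients L^1_{jk} = (g^{1s}/2)·(δg_{js}/δx^k + δg_{ks}/δx^j − δg_{jk}/δx^s) of the 2D-monolayer metric satisfy: L^1_{11} = p r³ |V| (2|V|t − 5r)/(m ṙ³ e^{−2|V|t/r} − 2p r⁵ |V|) − N^{(1)}_{(1)1}·C^{1(1)}_{1(1)}, L^1_{12} = L^1_{21} = −(m e^{−2|V|t/r}/(2p|V|r⁴))·ṙ³·φ̇·C^{1(1)}_{1(1)}, and L^1_{22} = m r / (2p r⁵ |V| e^{2|V|t/r} ṙ⁻³ − m), where C^{1(1)}_{1(1)} = 3p r⁵ |V| / (m ṙ⁴ e^{−2|V|t/r} − 2p r⁵ |V| ṙ), at every point with r > 0, ṙ ≠ 0 and g₁₁ ≠ 0. -/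

import Mathlib

/-- The fundamental metrical d-tensor g_{ij} of the 2D-monolayer Lagrangian. -/
noncomputable def gE (m p V : ℝ) (i j : Fin 2) (t r φ rd φd : ℝ) : ℝ :=
  if i = 0 ∧ j = 0 then (m - 2 * p * r ^ 5 * |V| * Real.exp (2 * |V| * t / r) * (rd ^ 3)⁻¹) / 2
  else if i = 1 ∧ j = 1 then m * r ^ 2 / 2 else 0

/-- The inverse fundamental metric g^{ij}. -/
noncomputable def gI (m p V : ℝ) (i j : Fin 2) (t r φ rd φd : ℝ) : ℝ :=
  if i = 0 ∧ j = 0 then 2 / (m - 2 * p * r ^ 5 * |V| * Real.exp (2 * |V| * t / r) * (rd ^ 3)⁻¹)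
  else if i = 1 ∧ j = 1 then 2 / (m * r ^ 2) else 0

/-- The canonical nonlinear connection components N^{(q)}_{(1)k}. -/
noncomputable def NN (m p V : ℝ) (𝒰 : ℝ → ℝ → ℝ) (q k : Fin 2) (t r φ rd φd : ℝ) : ℝ :=
  if q = 0 then
    if k = 0 then
      -|V| / (2 * r) + (2 * |V| * t / r ^ 2 - 5 / r) * rd - 𝒰 t r * rd ^ 2
        + 3 * m * Real.exp (-(2 * |V| * t) / r) / (4 * p * |V| * r ^ 4) * rd ^ 2 * φd ^ 2
    else m * Real.exp (-(2 * |V| * t) / r) / (2 * p * |V| * r ^ 4) * rd ^ 3 * φd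
  else if k = 0 then φd / r else rd / r

/-- Partial derivative ∂F/∂x^k, with (x¹,x²) = (r,φ). -/
noncomputable def dx (k : Fin 2) (F : ℝ → ℝ → ℝ → ℝ → ℝ → ℝ) (t r φ rd φd : ℝ) : ℝ :=
  if k = 0 then deriv (fun a => F t a φ rd φd) r else deriv (fun a => F t r a rd φd) φ

/-- Partial derivative ∂F/∂y^k, with (y¹,y²) = (ṙ,φ̇). -/
noncomputable def dy (k : Fin 2) (F : ℝ → ℝ → ℝ → ℝ → ℝ → ℝ) (t r φ rd φd : ℝ) : ℝ :=
  if k = 0 then deriv (fun a => F t r φ a φd) rd else deriv (fun a => F t r φ rd a) φd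

/-- Horizontal derivative δF/δx^k = ∂F/∂x^k − N^{(q)}_{(1)k}·∂F/∂y^q. -/
noncomputable def del (m p V : ℝ) (𝒰 : ℝ → ℝ → ℝ) (k : Fin 2)
    (F : ℝ → ℝ → ℝ → ℝ → ℝ → ℝ) (t r φ rd φd : ℝ) : ℝ :=
  dx k F t r φ rd φd - ∑ q : Fin 2, NN m p V 𝒰 q k t r φ rd φd * dy q F t r φ rd φd

/-- Temporal Cartan coefficients G^k_{j1} = (g^{ks}/2)·∂g_{sj}/∂t. -/
noncomputable def Gtime (m p V : ℝ) (k j : Fin 2) (t r φ rd φd : ℝ) : ℝ :=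
  ∑ s : Fin 2, gI m p V k s t r φ rd φd / 2 * deriv (fun a => gE m p V s j a r φ rd φd) t

/-- Vertical Cartan coefficients C^{i(1)}_{j(k)} = (g^{is}/2)·∂g_{js}/∂y^k. -/
noncomputable def Cv (m p V : ℝ) (i j k : Fin 2) (t r φ rd φd : ℝ) : ℝ :=
  ∑ s : Fin 2, gI m p V i s t r φ rd φd / 2 * dy k (gE m p V j s) t r φ rd φd

/-- Spatial Cartan coefficients
L^i_{jk} = (g^{is}/2)·(δg_{js}/δx^k + δg_{ks}/δx^j − δg_{jk}/δx^s). -/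
noncomputable def Lc (m p V : ℝ) (𝒰 : ℝ → ℝ → ℝ) (i j k : Fin 2) (t r φ rd φd : ℝ) : ℝ :=
  ∑ s : Fin 2, gI m p V i s t r φ rd φd / 2 *
    (del m p V 𝒰 k (gE m p V j s) t r φ rd φd + del m p V 𝒰 j (gE m p V k s) t r φ rd φd
      - del m p V 𝒰 s (gE m p V j k) t r φ rd φd)


lemma keyR (M c v b d : ℝ) {x : ℝ} (hx : x ≠ 0) :
    HasDerivAt (fun a : ℝ => M - c * a ^ 5 * v * Real.exp (b / a) * d)
      (-(c * v * Real.exp (b / x) * (5 * x ^ 4 - b * x ^ 3) * d)) x := by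
  have h1 : HasDerivAt (fun a : ℝ => b / a) (-(b / x ^ 2)) x := by
    simpa [div_eq_mul_inv] using (hasDerivAt_inv hx).const_mul b
  have h2 := h1.exp
  have h3 : HasDerivAt (fun a : ℝ => a ^ 5) (5 * x ^ 4) x := by
    simpa using hasDerivAt_pow 5 x
  have h4 := ((((h3.const_mul c).mul_const v).mul h2).mul_const d)
  have h5 := (hasDerivAt_const x M).sub h4
  refine h5.congr_deriv ?_
  field_simp
  ring

lemma keyY (M C : ℝ) {x : ℝ} (hx : x ≠ 0) :
    HasDerivAt (fun a : ℝ => M - C * (a ^ 3)⁻¹) (3 * C * (x ^ 4)⁻¹) x := by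
  have h3 : HasDerivAt (fun a : ℝ => a ^ 3) (3 * x ^ 2) x := by simpa using hasDerivAt_pow 3 x
  have h4 := (h3.inv (pow_ne_zero 3 hx)).const_mul C
  have h5 := (hasDerivAt_const x M).sub h4
  refine h5.congr_deriv ?_
  field_simp
  ring

set_option maxHeartbeats 1000000 in
/-- the spatial Cartan coefficients L^1_{jk} of the 2D-monolayer metric. -/
theorem stmt8 (m p V : ℝ) (hm : 0 < m) (hp : 0 < p) (hV : V ≠ 0)
    (𝒰 : ℝ → ℝ → ℝ) (h𝒰 : ContDiff ℝ 1 (Function.uncurry 𝒰))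
    (t r φ rd φd : ℝ) (hr : 0 < r) (hrd : rd ≠ 0)
    (hg11 : (m - 2 * p * r ^ 5 * |V| * Real.exp (2 * |V| * t / r) * (rd ^ 3)⁻¹) / 2 ≠ 0) :
    Lc m p V 𝒰 0 0 0 t r φ rd φd
        = p * r ^ 3 * |V| * (2 * |V| * t - 5 * r)
            / (m * rd ^ 3 * Real.exp (-(2 * |V| * t) / r) - 2 * p * r ^ 5 * |V|)
          - NN m p V 𝒰 0 0 t r φ rd φd
            * (3 * p * r ^ 5 * |V|
                / (m * rd ^ 4 * Real.exp (-(2 * |V| * t) / r) - 2 * p * r ^ 5 * |V| * rd))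
      ∧ Lc m p V 𝒰 0 0 1 t r φ rd φd
        = -(m * Real.exp (-(2 * |V| * t) / r) / (2 * p * |V| * r ^ 4)) * rd ^ 3 * φd
            * (3 * p * r ^ 5 * |V|
                / (m * rd ^ 4 * Real.exp (-(2 * |V| * t) / r) - 2 * p * r ^ 5 * |V| * rd))
      ∧ Lc m p V 𝒰 0 1 0 t r φ rd φd
        = -(m * Real.exp (-(2 * |V| * t) / r) / (2 * p * |V| * r ^ 4)) * rd ^ 3 * φd
            * (3 * p * r ^ 5 * |V|
                / (m * rd ^ 4 * Real.exp (-(2 * |V| * t) / r) - 2 * p * r ^ 5 * |V| * rd))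
      ∧ Lc m p V 𝒰 0 1 1 t r φ rd φd
        = m * r / (2 * p * r ^ 5 * |V| * Real.exp (2 * |V| * t / r) * (rd ^ 3)⁻¹ - m) := by

  have hd1 : deriv (fun x : ℝ => m - 2 * p * x ^ 5 * |V| * Real.exp (2 * |V| * t / x) * (rd ^ 3)⁻¹) r
      = -(2 * p * |V| * Real.exp (2 * |V| * t / r) * (5 * r ^ 4 - 2 * |V| * t * r ^ 3) * (rd ^ 3)⁻¹) :=
    (keyR m (2 * p) (|V|) (2 * (|V|) * t) ((rd ^ 3)⁻¹) hr.ne').deriv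
  have hd2 : deriv (fun x : ℝ => m - 2 * p * r ^ 5 * |V| * Real.exp (2 * |V| * t / r) * (x ^ 3)⁻¹) rd
      = 3 * (2 * p * r ^ 5 * |V| * Real.exp (2 * |V| * t / r)) * (rd ^ 4)⁻¹ :=
    (keyY m (2 * p * r ^ 5 * |V| * Real.exp (2 * |V| * t / r)) hrd).deriv
  set e := Real.exp (2 * |V| * t / r) with he
  have hene : e ≠ 0 := Real.exp_ne_zero _
  have he' : Real.exp (-(2 * |V| * t) / r) = e⁻¹ := by
    rw [neg_div, Real.exp_neg, he]
  have hD : m - 2 * p * r ^ 5 * |V| * e * (rd ^ 3)⁻¹ ≠ 0 := by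
    intro h
    exact hg11 (by rw [he, h]; norm_num)
  have hK : m * rd ^ 3 - 2 * p * r ^ 5 * |V| * e ≠ 0 := by
    have : m * rd ^ 3 - 2 * p * r ^ 5 * |V| * e
        = rd ^ 3 * (m - 2 * p * r ^ 5 * |V| * e * (rd ^ 3)⁻¹) := by
      field_simp
    rw [this]
    exact mul_ne_zero (pow_ne_zero _ hrd) hD
  have hDeq : m - 2 * p * r ^ 5 * |V| * e * (rd ^ 3)⁻¹
      = (m * rd ^ 3 - 2 * p * r ^ 5 * |V| * e) * (rd ^ 3)⁻¹ := by
    field_simp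
  have h2' : m * rd ^ 3 * e⁻¹ - 2 * p * r ^ 5 * |V|
      = (m * rd ^ 3 - 2 * p * r ^ 5 * |V| * e) * e⁻¹ := by
    field_simp
  have h3' : m * rd ^ 4 * e⁻¹ - 2 * p * r ^ 5 * |V| * rd
      = (m * rd ^ 3 - 2 * p * r ^ 5 * |V| * e) * rd * e⁻¹ := by
    field_simp
  have habs : |V| ≠ 0 := abs_ne_zero.mpr hV
  have hK2 : 2 * p * r ^ 5 * |V| * e - m * rd ^ 3 ≠ 0 := by
    intro h
    exact hK (by linarith [h])
  have hDeq2 : 2 * p * r ^ 5 * |V| * e * (rd ^ 3)⁻¹ - m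
      = (2 * p * r ^ 5 * |V| * e - m * rd ^ 3) * (rd ^ 3)⁻¹ := by
    field_simp
  have hN01 : NN m p V 𝒰 0 1 t r φ rd φd = m * e⁻¹ / (2 * p * |V| * r ^ 4) * rd ^ 3 * φd := by
    simp [NN, he']
  have hd3 : deriv (fun x : ℝ => (x ^ 3)⁻¹) rd = -3 * (rd ^ 4)⁻¹ := by
    have := (keyY 0 (-1) hrd).deriv
    simp only [zero_sub, neg_one_mul, neg_neg] at this
    rw [this]
    ring
  have hd3' : deriv (fun x : ℝ => x⁻¹ ^ 3) rd = -3 * (rd ^ 4)⁻¹ := by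
    simpa only [inv_pow] using hd3
  refine ⟨?_, ?_, ?_, ?_⟩
  · norm_num [Lc, gI, gE, del, dx, dy, Fin.sum_univ_two, hd1, hd2, hd3, hd3']
    rw [he', h2', h3', hDeq]
    field_simp [hK]
    ring
  · norm_num [Lc, gI, gE, del, dx, dy, Fin.sum_univ_two, hd1, hd2, hd3, hd3', hN01]
    rw [he', h3', hDeq]
    field_simp [hK]
    ring
  · norm_num [Lc, gI, gE, del, dx, dy, Fin.sum_univ_two, hd1, hd2, hd3, hd3', hN01]
    rw [he', h3', hDeq]
    field_simp [hK]
    ring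
  · norm_num [Lc, gI, gE, del, dx, dy, Fin.sum_univ_two, hd1, hd2, hd3, hd3', hN01]
    rw [hDeq, hDeq2]
    field_simp [hK, hK2]
    ring
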